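/- arXiv:2409.17563 — 4 statements merged into one kernel-verified Lean document; each statement's English description precedes it below -/
import Mathlib

section
/- Let F be a bounded holomorphic function on the open unit disk, not identically zero, and let (z_n) be a sequence of (not necessarily distinct) zeros of F. Then the Blaschke condition holds: ∑_n (1 - |z_n|) < ∞. -/
open Complex Metric Set Filter Topology Filter Topology

noncomputable def bl (a w : ℂ) : ℂ := (w - a) / (1 - (starRingEnd ℂ) a * w)

lemma bl_identity (a w : ℂ) :
    ‖1 - (starRingEnd ℂ) a * w‖ ^ 2 - ‖w - a‖ ^ 2 = (1 - ‖a‖ ^ 2) * (1 - ‖w‖ ^ 2) := by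
  rw [Complex.sq_norm, Complex.sq_norm, Complex.sq_norm, Complex.sq_norm]
  simp [Complex.normSq_apply, Complex.mul_re, Complex.mul_im]
  ring

lemma bl_den_ne {a w : ℂ} (ha : ‖a‖ < 1) (hw : ‖w‖ < 1) :
    (1 : ℂ) - (starRingEnd ℂ) a * w ≠ 0 := by
  intro h
  have h1 : (1 : ℂ) = (starRingEnd ℂ) a * w := by linear_combination h
  have : ‖(starRingEnd ℂ) a * w‖ < 1 := by
    rw [norm_mul, RCLike.norm_conj]
    nlinarith [norm_nonneg a, norm_nonneg w]
  rw [← h1] at this; simp at this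

lemma bl_norm (a w : ℂ) : ‖bl a w‖ = ‖w - a‖ / ‖1 - (starRingEnd ℂ) a * w‖ := norm_div _ _

lemma bl_le_one {a w : ℂ} (ha : ‖a‖ < 1) (hw : ‖w‖ < 1) : ‖bl a w‖ ≤ 1 := by
  have hid := bl_identity a w
  have hd : (0:ℝ) < ‖1 - (starRingEnd ℂ) a * w‖ := norm_pos_iff.mpr (bl_den_ne ha hw)
  have h1 : (0:ℝ) < 1 - ‖a‖^2 := by nlinarith [norm_nonneg a]
  have h2 : (0:ℝ) < 1 - ‖w‖^2 := by nlinarith [norm_nonneg w]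
  rw [bl_norm, div_le_one hd]
  nlinarith [norm_nonneg (w - a), mul_pos h1 h2]

-- lower bound on the circle ‖x‖ = r
lemma bl_lower {a x : ℂ} {r : ℝ} (hx : ‖x‖ = r) (har : ‖a‖ < r) (hr : r < 1) :
    (r - ‖a‖) / (1 - ‖a‖ * r) ≤ ‖bl a x‖ := by
  have ha : ‖a‖ < 1 := har.trans hr
  have hxx : ‖x‖ < 1 := by rw [hx]; exact hr
  have hid := bl_identity a x
  have hD : (0:ℝ) < ‖1 - (starRingEnd ℂ) a * x‖ := norm_pos_iff.mpr (bl_den_ne ha hxx)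
  have ha0 : (0:ℝ) ≤ ‖a‖ := norm_nonneg a
  have hden : (0:ℝ) < 1 - ‖a‖ * r := by nlinarith
  have hDlb : 1 - ‖a‖ * r ≤ ‖1 - (starRingEnd ℂ) a * x‖ := by
    have := norm_sub_norm_le (1 : ℂ) ((starRingEnd ℂ) a * x)
    rw [norm_mul, RCLike.norm_conj, hx] at this
    simpa using this
  have hNlb : r - ‖a‖ ≤ ‖x - a‖ := by
    have := norm_sub_norm_le x a
    rw [hx] at this; linarith
  rw [bl_norm, div_le_div_iff₀ hden hD]
  have hN0 : (0:ℝ) ≤ ‖x - a‖ := norm_nonneg _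
  have hsq : ((r - ‖a‖) * ‖1 - (starRingEnd ℂ) a * x‖)^2 ≤ (‖x - a‖ * (1 - ‖a‖ * r))^2 := by
    have hr0 : (0:ℝ) ≤ r := ha0.trans har.le
    have hc : (0:ℝ) ≤ (1 - ‖a‖^2) * (1 - r^2) := mul_nonneg (by nlinarith) (by nlinarith)
    rw [hx] at hid
    nlinarith [sq_nonneg (‖x - a‖ - (r - ‖a‖)), mul_nonneg (sub_nonneg.mpr hNlb) hc,
      sq_nonneg (‖x - a‖ + (r - ‖a‖))]
  have hA : (0:ℝ) ≤ (r - ‖a‖) * ‖1 - (starRingEnd ℂ) a * x‖ :=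
    mul_nonneg (by linarith) hD.le
  have hB : (0:ℝ) ≤ ‖x - a‖ * (1 - ‖a‖ * r) := mul_nonneg hN0 hden.le
  nlinarith [hsq, hA, hB]

-- comparison: 1 - ‖a‖ controlled by 1 - ‖bl a w‖
lemma bl_compare {a w : ℂ} (ha : ‖a‖ < 1) (hw : ‖w‖ < 1) :
    (1 - ‖a‖) * (1 - ‖w‖^2) ≤ 8 * (1 - ‖bl a w‖) := by
  have hid := bl_identity a w
  have hD : (0:ℝ) < ‖1 - (starRingEnd ℂ) a * w‖ := norm_pos_iff.mpr (bl_den_ne ha hw)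
  have ht1 : ‖bl a w‖ ≤ 1 := bl_le_one ha hw
  have htd : ‖bl a w‖ * ‖1 - (starRingEnd ℂ) a * w‖ = ‖w - a‖ := by
    rw [bl_norm, div_mul_cancel₀ _ hD.ne']
  have hDub : ‖1 - (starRingEnd ℂ) a * w‖ ≤ 2 := by
    calc ‖1 - (starRingEnd ℂ) a * w‖ ≤ ‖(1:ℂ)‖ + ‖(starRingEnd ℂ) a * w‖ := norm_sub_le _ _
    _ ≤ 2 := by
        rw [norm_mul, RCLike.norm_conj]
        have := norm_nonneg a; have := norm_nonneg w
        simp only [norm_one]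
        nlinarith
  have hN0 : (0:ℝ) ≤ ‖w - a‖ := norm_nonneg _
  have ht0 : (0:ℝ) ≤ ‖bl a w‖ := norm_nonneg _
  have ha0 : (0:ℝ) ≤ ‖a‖ := norm_nonneg a
  have hw0 : (0:ℝ) ≤ ‖w‖ := norm_nonneg w
  nlinarith [mul_nonneg (sub_nonneg.mpr ht1) (sub_nonneg.mpr hDub),
    mul_nonneg ha0 (sub_nonneg.mpr ht1), sq_nonneg (1 - ‖bl a w‖)]

lemma bl_factor (F : ℂ → ℂ) (hF : DifferentiableOn ℂ F (Metric.ball (0 : ℂ) 1))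
    (z : ℕ → ℂ) (hinj : Function.Injective z)
    (hz : ∀ n, z n ∈ Metric.ball (0 : ℂ) 1 ∧ F (z n) = 0) (S : Finset ℕ) :
    ∃ H : ℂ → ℂ, DifferentiableOn ℂ H (Metric.ball (0 : ℂ) 1) ∧
      ∀ x ∈ Metric.ball (0 : ℂ) 1, F x = H x * ∏ k ∈ S, bl (z k) x := by
  induction S using Finset.induction_on with
  | empty => exact ⟨F, hF, fun x _ => by simp⟩
  | insert a S ha hH' =>
    obtain ⟨H, hH, hfac⟩ := hH'
    have hza : z a ∈ Metric.ball (0:ℂ) 1 := (hz a).1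
    have hzan : ‖z a‖ < 1 := by simpa [mem_ball_zero_iff] using hza
    -- H (z a) = 0
    have hHza : H (z a) = 0 := by
      have h1 : F (z a) = H (z a) * ∏ k ∈ S, bl (z k) (z a) := hfac _ hza
      rw [(hz a).2] at h1
      have hprod : (∏ k ∈ S, bl (z k) (z a)) ≠ 0 := by
        apply Finset.prod_ne_zero_iff.mpr
        intro k hk
        have hk1 : ‖z k‖ < 1 := by simpa [mem_ball_zero_iff] using (hz k).1
        have hne : z a - z k ≠ 0 := sub_ne_zero.mpr fun h => ha (hinj h ▸ hk)
        exact div_ne_zero hne (bl_den_ne hk1 hzan)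
      exact (mul_eq_zero.mp h1.symm).resolve_right hprod
    refine ⟨fun x => dslope H (z a) x * (1 - (starRingEnd ℂ) (z a) * x), ?_, ?_⟩
    · exact ((Complex.differentiableOn_dslope (isOpen_ball.mem_nhds hza)).mpr hH).mul
        (((differentiable_const (1:ℂ)).sub ((differentiable_const _).mul differentiable_id)).differentiableOn)
    · intro x hx
      have hxn : ‖x‖ < 1 := by simpa [mem_ball_zero_iff] using hx
      have hden := bl_den_ne hzan hxn
      have hds : (x - z a) * dslope H (z a) x = H x := by
        have := sub_smul_dslope H (z a) x
        rw [hHza, sub_zero] at this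
        simpa [smul_eq_mul] using this
      have hcanc : bl (z a) x * (1 - (starRingEnd ℂ) (z a) * x) = x - z a :=
        div_mul_cancel₀ _ hden
      have key : dslope H (z a) x * (1 - (starRingEnd ℂ) (z a) * x) * bl (z a) x = H x := by
        calc dslope H (z a) x * (1 - (starRingEnd ℂ) (z a) * x) * bl (z a) x
            = dslope H (z a) x * (bl (z a) x * (1 - (starRingEnd ℂ) (z a) * x)) := by ring
          _ = dslope H (z a) x * (x - z a) := by rw [hcanc]
          _ = H x := by rw [mul_comm]; exact hds
      rw [Finset.prod_insert ha, hfac x hx, ← key]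
      ring

set_option maxHeartbeats 1000000 in
theorem blaschke_condition (F : ℂ → ℂ)
    (hF : DifferentiableOn ℂ F (Metric.ball (0 : ℂ) 1))
    (hb : ∃ C : ℝ, ∀ z ∈ Metric.ball (0 : ℂ) 1, ‖F z‖ ≤ C)
    (hnz : ∃ z ∈ Metric.ball (0 : ℂ) 1, F z ≠ 0)
    (z : ℕ → ℂ) (hinj : Function.Injective z)
    (hz : ∀ n, z n ∈ Metric.ball (0 : ℂ) 1 ∧ F (z n) = 0) :
    Summable (fun n => 1 - ‖z n‖) := by
  obtain ⟨w, hw, hFw⟩ := hnz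
  obtain ⟨C, hC⟩ := hb
  have hwn : ‖w‖ < 1 := mem_ball_zero_iff.mp hw
  have hFwpos : 0 < ‖F w‖ := norm_pos_iff.mpr hFw
  have hCpos : 0 < C := lt_of_lt_of_le hFwpos (hC w hw)
  have hzn : ∀ n, ‖z n‖ < 1 := fun n => mem_ball_zero_iff.mp (hz n).1
  -- Key estimate via maximum modulus
  have key : ∀ S : Finset ℕ, ‖F w‖ ≤ C * ∏ k ∈ S, ‖bl (z k) w‖ := by
    intro S
    obtain ⟨H, hH, hfac⟩ := bl_factor F hF z hinj hz S
    set ρ : ℝ := max ‖w‖ (if h : S.Nonempty then S.sup' h (fun k => ‖z k‖) else 0) with hρdef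
    have hρw : ‖w‖ ≤ ρ := le_max_left _ _
    have hρz : ∀ k ∈ S, ‖z k‖ ≤ ρ := by
      intro k hk
      refine le_trans ?_ (le_max_right _ _)
      rw [dif_pos ⟨k, hk⟩]
      exact Finset.le_sup' (f := fun k => ‖z k‖) hk
    have hρ0 : 0 ≤ ρ := le_trans (norm_nonneg w) hρw
    have hρ1 : ρ < 1 := by
      apply max_lt hwn
      split_ifs with h
      · exact (Finset.sup'_lt_iff h).mpr (fun k _ => hzn k)
      · norm_num
    have step : ∀ r ∈ Set.Ioo ρ 1,
        ‖H w‖ ≤ C / ∏ k ∈ S, ((r - ‖z k‖) / (1 - ‖z k‖ * r)) := by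
      intro r hr
      obtain ⟨hr1, hr2⟩ := hr
      have hr0 : 0 < r := lt_of_le_of_lt hρ0 hr1
      have hpr : 0 < ∏ k ∈ S, ((r - ‖z k‖) / (1 - ‖z k‖ * r)) := by
        apply Finset.prod_pos
        intro k hk
        have h1 : ‖z k‖ < r := lt_of_le_of_lt (hρz k hk) hr1
        have h2 : 0 < 1 - ‖z k‖ * r := by nlinarith [norm_nonneg (z k)]
        exact div_pos (by linarith) h2
      have hball : Metric.ball (0:ℂ) r ⊆ Metric.ball (0:ℂ) 1 := Metric.ball_subset_ball hr2.le
      have hclos : closure (Metric.ball (0:ℂ) r) ⊆ Metric.ball (0:ℂ) 1 := by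
        rw [closure_ball (0:ℂ) hr0.ne']
        intro x hx
        rw [mem_closedBall_zero_iff] at hx
        exact mem_ball_zero_iff.mpr (lt_of_le_of_lt hx hr2)
      have hd : DiffContOnCl ℂ H (Metric.ball 0 r) :=
        ⟨hH.mono hball, hH.continuousOn.mono hclos⟩
      have hfront : ∀ x ∈ frontier (Metric.ball (0:ℂ) r),
          ‖H x‖ ≤ C / ∏ k ∈ S, ((r - ‖z k‖) / (1 - ‖z k‖ * r)) := by
        intro x hx
        rw [frontier_ball (0:ℂ) hr0.ne'] at hx
        have hxr : ‖x‖ = r := by simpa using mem_sphere_zero_iff_norm.mp hx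
        have hx1 : x ∈ Metric.ball (0:ℂ) 1 := mem_ball_zero_iff.mpr (hxr ▸ hr2)
        have heq : ‖F x‖ = ‖H x‖ * ∏ k ∈ S, ‖bl (z k) x‖ := by
          rw [hfac x hx1, norm_mul, norm_prod]
        have hPl : (∏ k ∈ S, ((r - ‖z k‖) / (1 - ‖z k‖ * r))) ≤ ∏ k ∈ S, ‖bl (z k) x‖ := by
          apply Finset.prod_le_prod
          · intro k hk
            have h1 : ‖z k‖ < r := lt_of_le_of_lt (hρz k hk) hr1
            have h2 : 0 < 1 - ‖z k‖ * r := by nlinarith [norm_nonneg (z k)]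
            exact le_of_lt (div_pos (by linarith) h2)
          · intro k hk
            exact bl_lower hxr (lt_of_le_of_lt (hρz k hk) hr1) hr2
        rw [le_div_iff₀ hpr]
        calc ‖H x‖ * ∏ k ∈ S, ((r - ‖z k‖) / (1 - ‖z k‖ * r))
            ≤ ‖H x‖ * ∏ k ∈ S, ‖bl (z k) x‖ := by
              exact mul_le_mul_of_nonneg_left hPl (norm_nonneg _)
          _ = ‖F x‖ := heq.symm
          _ ≤ C := hC x hx1
      exact Complex.norm_le_of_forall_mem_frontier_norm_le isBounded_ball hd hfront
        (subset_closure (mem_ball_zero_iff.mpr (lt_of_le_of_lt hρw hr1)))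
    have hHw : ‖H w‖ ≤ C := by
      have hne : (nhdsWithin (1:ℝ) (Set.Ioo ρ 1)).NeBot := right_nhdsWithin_Ioo_neBot hρ1
      have hp : Filter.Tendsto (fun r : ℝ => ∏ k ∈ S, ((r - ‖z k‖) / (1 - ‖z k‖ * r)))
          (nhdsWithin (1:ℝ) (Set.Ioo ρ 1)) (𝓝 1) := by
        have h1 : Filter.Tendsto (fun r : ℝ => ∏ k ∈ S, ((r - ‖z k‖) / (1 - ‖z k‖ * r)))
            (nhdsWithin (1:ℝ) (Set.Ioo ρ 1))
            (𝓝 (∏ k ∈ S, ((1 - ‖z k‖) / (1 - ‖z k‖ * 1)))) := by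
          apply tendsto_finset_prod
          intro k _
          have hden : (1:ℝ) - ‖z k‖ * 1 ≠ 0 := by
            have := hzn k; intro h; nlinarith
          have hca : ContinuousAt (fun r : ℝ => (r - ‖z k‖) / (1 - ‖z k‖ * r)) 1 := by
            apply ContinuousAt.div
            · fun_prop
            · fun_prop
            · exact hden
          exact hca.continuousWithinAt
        have : (∏ k ∈ S, ((1 - ‖z k‖) / (1 - ‖z k‖ * 1))) = 1 := by
          apply Finset.prod_eq_one
          intro k _
          rw [mul_one]
          exact div_self (by have := hzn k; intro h; nlinarith)
        rwa [this] at h1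
      have htend : Filter.Tendsto (fun r : ℝ => C / ∏ k ∈ S, ((r - ‖z k‖) / (1 - ‖z k‖ * r)))
          (nhdsWithin (1:ℝ) (Set.Ioo ρ 1)) (𝓝 C) := by
        have := Filter.Tendsto.div (tendsto_const_nhds (x := C)
          (f := nhdsWithin (1:ℝ) (Set.Ioo ρ 1))) hp one_ne_zero
        rw [div_one] at this; exact this
      exact ge_of_tendsto htend (eventually_mem_nhdsWithin.mono (fun r hr => step r hr))
    calc ‖F w‖ = ‖H w‖ * ∏ k ∈ S, ‖bl (z k) w‖ := by rw [hfac w hw, norm_mul, norm_prod]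
      _ ≤ C * ∏ k ∈ S, ‖bl (z k) w‖ :=
          mul_le_mul_of_nonneg_right hHw (Finset.prod_nonneg fun k _ => norm_nonneg _)
  -- From product bound to sum bound
  have hδ : 0 < ‖F w‖ / C := div_pos hFwpos hCpos
  have hsum1 : ∀ S : Finset ℕ, ∑ k ∈ S, (1 - ‖bl (z k) w‖) ≤ -Real.log (‖F w‖ / C) := by
    intro S
    have h1 : ‖F w‖ / C ≤ ∏ k ∈ S, ‖bl (z k) w‖ := by
      rw [div_le_iff₀ hCpos, mul_comm]
      exact key S
    have h2 : (∏ k ∈ S, ‖bl (z k) w‖) ≤ Real.exp (∑ k ∈ S, (‖bl (z k) w‖ - 1)) := by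
      rw [Real.exp_sum]
      apply Finset.prod_le_prod (fun k _ => norm_nonneg _)
      intro k _
      have := Real.add_one_le_exp (‖bl (z k) w‖ - 1)
      linarith
    have h3 : Real.log (‖F w‖ / C) ≤ ∑ k ∈ S, (‖bl (z k) w‖ - 1) :=
      (Real.log_le_iff_le_exp hδ).mpr (h1.trans h2)
    have h4 : ∑ k ∈ S, (1 - ‖bl (z k) w‖) = -∑ k ∈ S, (‖bl (z k) w‖ - 1) := by
      rw [← Finset.sum_neg_distrib]
      exact Finset.sum_congr rfl (fun k _ => by ring)
    linarith
  have hsum : Summable (fun n => 1 - ‖bl (z n) w‖) :=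
    summable_of_sum_le (fun n => sub_nonneg.mpr (bl_le_one (hzn n) hwn)) hsum1
  have hw2 : 0 < 1 - ‖w‖^2 := by nlinarith [norm_nonneg w]
  refine Summable.of_nonneg_of_le (f := fun n => (8 / (1 - ‖w‖^2)) * (1 - ‖bl (z n) w‖))
    (fun n => by have := hzn n; linarith) (fun n => ?_) (hsum.mul_left _)
  have hcomp := bl_compare (hzn n) hwn
  show 1 - ‖z n‖ ≤ 8 / (1 - ‖w‖ ^ 2) * (1 - ‖bl (z n) w‖)
  rw [div_mul_eq_mul_div, le_div_iff₀ hw2]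
  linarith [hcomp]
end

section
/- Let f ∈ L¹(ℝ) be continuous and not identically zero, and let μ be a compactly supported complex regular Borel measure on ℝ. If the convolution f * μ vanishes identically on ℝ, i.e. ∫ f(x - t) dμ(t) = 0 for all x ∈ ℝ, then μ = 0. -/
open MeasureTheory Filter Complex
open scoped Topology FourierTransform RealInnerProductSpace Real ContDiff

/-- A smooth compactly supported function is a Schwartz map. -/
noncomputable def smoothCompactToSchwartz (g : ℝ → ℂ) (hg : ContDiff ℝ ∞ g)
    (hsupp : HasCompactSupport g) : SchwartzMap ℝ ℂ where
  toFun := g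
  smooth' := hg
  decay' := by
    intro k n
    obtain ⟨C, hC⟩ := Continuous.bounded_above_of_compact_support
      (((continuous_norm.pow k)).mul
        ((hg.continuous_iteratedFDeriv (mod_cast le_top)).norm))
      (((hsupp.iteratedFDeriv n).norm).mul_left)
    exact ⟨C, fun x => by simpa using hC x⟩

/-- If all Fourier coefficients of an integrable function (w.r.t. an arbitrary σ-finite
measure) vanish, the function vanishes a.e. -/
theorem fourier_ae_zero (μ : Measure ℝ) [SigmaFinite μ] (w : ℝ → ℂ) (hw : Integrable w μ)
    (h : ∀ ξ : ℝ, VectorFourier.fourierIntegral Real.fourierChar μ (innerₗ ℝ) w ξ = 0) :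
    ∀ᵐ t ∂μ, w t = 0 := by
  have hL : Continuous fun p : ℝ × ℝ => (innerₗ ℝ) p.1 p.2 := continuous_inner
  have flip_eq : (innerₗ ℝ).flip = innerₗ ℝ :=
    LinearMap.ext fun x => LinearMap.ext fun y => real_inner_comm x y
  have key : ∀ ψ : SchwartzMap ℝ ℂ, ∫ t, w t • (𝓕 ⇑ψ) t ∂μ = 0 := by
    intro ψ
    have H := VectorFourier.integral_fourierIntegral_smul_eq_flip
      (e := Real.fourierChar) (L := innerₗ ℝ) (μ := μ) (ν := (volume : Measure ℝ))
      Real.continuous_fourierChar hL hw ψ.integrable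
    rw [flip_eq] at H
    simp only [h, zero_smul, integral_zero] at H
    exact H.symm
  have key' : ∀ φ : SchwartzMap ℝ ℂ, ∫ t, w t * φ t ∂μ = 0 := by
    intro φ
    set ψ := (SchwartzMap.fourierTransformCLE ℂ (SchwartzMap ℝ ℂ)).symm φ with hψ
    have hφψ : ⇑φ = 𝓕 ⇑ψ := by
      rw [← SchwartzMap.fourier_coe]
      exact congrArg _ ((SchwartzMap.fourierTransformCLE ℂ (SchwartzMap ℝ ℂ)).apply_symm_apply φ).symm
    have := key ψ
    rw [← hφψ] at this
    simpa [smul_eq_mul] using this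
  have hsmul : ∀ (g : ℝ → ℝ), ContDiff ℝ ∞ g → HasCompactSupport g →
      ∫ x, g x • w x ∂μ = 0 := by
    intro g hg hgsupp
    have hgC : ContDiff ℝ ∞ (fun x => (g x : ℂ)) :=
      Complex.ofRealCLM.contDiff.comp hg
    have hgCsupp : HasCompactSupport (fun x => (g x : ℂ)) :=
      hgsupp.comp_left Complex.ofReal_zero
    have := key' (smoothCompactToSchwartz (fun x => (g x : ℂ)) hgC hgCsupp)
    have heq : (fun x => g x • w x) = fun x => w x * (g x : ℂ) := by
      ext x
      simp [Complex.real_smul, mul_comm]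
    rw [heq]
    simpa [smoothCompactToSchwartz] using (show ∫ t, w t * (g t : ℂ) ∂μ = 0 from this)
  exact ae_eq_zero_of_integral_contDiff_smul_eq_zero hw.locallyIntegrable hsmul

set_option maxHeartbeats 1000000 in
theorem integrable_continuous_not_mean_periodic
    (f : ℝ → ℂ) (hf : Continuous f) (hfi : Integrable f)
    (hfnz : ∃ x, f x ≠ 0)
    (ν : Measure ℝ) [IsFiniteMeasure ν]
    (w : ℝ → ℂ) (hw : Integrable w ν)
    (hsupp : ∃ K : Set ℝ, IsCompact K ∧ ν Kᶜ = 0)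
    (hconv : ∀ x : ℝ, ∫ t, f (x - t) * w t ∂ν = 0) :
    ν.withDensityᵥ w = 0 := by
  obtain ⟨K, hK, hKc⟩ := hsupp
  obtain ⟨R₀, hR₀⟩ := hK.isBounded.exists_norm_le
  set R : ℝ := |R₀| with hRdef
  have hR : ∀ x ∈ K, |x| ≤ R := fun x hx => (hR₀ x hx).trans (le_abs_self R₀)
  have hRnn : 0 ≤ R := abs_nonneg _
  have haeK : ∀ᵐ t ∂ν, t ∈ K := by
    rw [ae_iff]
    simpa [Set.compl_def] using hKc
  have hL : Continuous fun p : ℝ × ℝ => (innerₗ ℝ) p.1 p.2 := continuous_inner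
  -- The "entire extension" of the Fourier transform of the measure w dν.
  set G : ℂ → ℂ := fun z => ∫ t, Complex.exp ((-2 * ↑π * ↑t) * Complex.I * z) * w t ∂ν
    with hGdef
  -- G agrees with the Fourier transform of w dν at real points.
  have hGreal : ∀ ξ : ℝ,
      VectorFourier.fourierIntegral Real.fourierChar ν (innerₗ ℝ) w ξ = G ξ := by
    intro ξ
    rw [hGdef, VectorFourier.fourierIntegral]
    congr 1
    ext t
    rw [Circle.smul_def, Real.fourierChar_apply]
    congr 2
    have : (innerₗ ℝ) t ξ = t * ξ := by simp [mul_comm]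
    rw [this]
    push_cast
    ring
  -- G is entire.
  have hGdiff : Differentiable ℂ G := by
    intro z₀
    set F : ℂ → ℝ → ℂ := fun z t => Complex.exp ((-2 * ↑π * ↑t) * Complex.I * z) * w t
      with hFdef
    set F' : ℂ → ℝ → ℂ :=
      fun z t => Complex.exp ((-2 * ↑π * ↑t) * Complex.I * z) * ((-2 * ↑π * ↑t) * Complex.I)
        * w t with hF'def
    have hnormF : ∀ z t, ‖F z t‖ = Real.exp (2 * π * t * z.im) * ‖w t‖ := by
      intro z t
      rw [hFdef]
      simp only [norm_mul, Complex.norm_exp]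
      congr 2
      simp [Complex.mul_re, Complex.mul_im] <;> ring
    have hmeas : ∀ z : ℂ, AEStronglyMeasurable (F z) ν := by
      intro z
      apply Continuous.aestronglyMeasurable ?_ |>.mul hw.1
      exact Complex.continuous_exp.comp (by fun_prop)
    have hbound_exp : ∀ z : ℂ, ∀ t ∈ K, 2 * π * t * z.im ≤ 2 * π * R * ‖z‖ := by
      intro z t ht
      calc 2 * π * t * z.im ≤ |2 * π * t * z.im| := le_abs_self _
        _ = 2 * π * |t| * |z.im| := by
            rw [abs_mul, abs_mul, abs_mul, _root_.abs_two,
              _root_.abs_of_nonneg Real.pi_pos.le]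
        _ = 2 * π * (|t| * |z.im|) := by ring
        _ ≤ 2 * π * (R * ‖z‖) := by
            have h2 : |z.im| ≤ ‖z‖ := by
              exact Complex.abs_im_le_norm z
            have h7 : |t| * |z.im| ≤ R * ‖z‖ :=
              mul_le_mul (hR t ht) h2 (abs_nonneg _) hRnn
            apply mul_le_mul_of_nonneg_left h7 (by positivity)
        _ = 2 * π * R * ‖z‖ := by ring
    refine HasDerivAt.differentiableAt
      ((hasDerivAt_integral_of_dominated_loc_of_deriv_le
        (F := F) (F' := F') (μ := ν) (x₀ := z₀)
        (bound := fun t => Real.exp (2 * π * R * (‖z₀‖ + 1)) * (2 * π * R) * ‖w t‖)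
        (Metric.ball_mem_nhds z₀ one_pos)
        (Eventually.of_forall fun z => hmeas z)
        ?_ ?_ ?_ ?_ ?_).2)
    · apply Integrable.mono' (hw.norm.const_mul (Real.exp (2 * π * R * (‖z₀‖ + 1))))
        (hmeas z₀)
      filter_upwards [haeK] with t ht
      rw [hnormF]
      apply mul_le_mul_of_nonneg_right _ (norm_nonneg _)
      apply Real.exp_le_exp.2
      calc 2 * π * t * z₀.im ≤ 2 * π * R * ‖z₀‖ := hbound_exp z₀ t ht
        _ ≤ 2 * π * R * (‖z₀‖ + 1) := by
            apply mul_le_mul_of_nonneg_left (by linarith) (by positivity)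
    · apply Continuous.aestronglyMeasurable ?_ |>.mul hw.1
      exact (Complex.continuous_exp.comp (by fun_prop)).mul (by fun_prop)
    · filter_upwards [haeK] with t ht
      intro z hz
      rw [hF'def]
      simp only [norm_mul, Complex.norm_exp, Complex.norm_I,
        mul_one, Complex.norm_real, Real.norm_eq_abs]
      have h1 : ((-2 * ↑π * ↑t : ℂ) * Complex.I * z).re = 2 * π * t * z.im := by
        simp [Complex.mul_re, Complex.mul_im] <;> ring
      rw [h1]
      have hz' : ‖z‖ ≤ ‖z₀‖ + 1 := by
        have hh := mem_ball_iff_norm.1 hz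
        calc ‖z‖ = ‖z₀ + (z - z₀)‖ := by congr 1; ring
          _ ≤ ‖z₀‖ + ‖z - z₀‖ := norm_add_le _ _
          _ ≤ ‖z₀‖ + 1 := by linarith
      have e1 : Real.exp (2 * π * t * z.im) ≤ Real.exp (2 * π * R * (‖z₀‖ + 1)) := by
        apply Real.exp_le_exp.2
        calc 2 * π * t * z.im ≤ 2 * π * R * ‖z‖ := hbound_exp z t ht
          _ ≤ 2 * π * R * (‖z₀‖ + 1) := by
              apply mul_le_mul_of_nonneg_left hz' (by positivity)
      have e2 : ‖(-2 : ℂ)‖ * |π| * |t| ≤ 2 * π * R := by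
        have h2 : ‖(-2 : ℂ)‖ = 2 := by norm_num
        rw [h2, _root_.abs_of_nonneg Real.pi_pos.le]
        apply mul_le_mul_of_nonneg_left (hR t ht) (by positivity)
      exact mul_le_mul_of_nonneg_right
        (mul_le_mul e1 e2 (by positivity) (Real.exp_pos _).le) (by positivity)
    · exact hw.norm.const_mul _
    · filter_upwards with t
      intro z hz
      have hd : HasDerivAt (fun z : ℂ => (-2 * ↑π * ↑t) * Complex.I * z)
          ((-2 * ↑π * ↑t) * Complex.I) z := by
        simpa using (hasDerivAt_id z).const_mul ((-2 * ↑π * (↑t : ℂ)) * Complex.I)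
      exact (hd.cexp).mul_const (w t)
  have hGanalytic : AnalyticOnNhd ℂ G Set.univ :=
    analyticOnNhd_univ_iff_differentiable.2 hGdiff
  -- The key Fubini identity: 𝓕 f ξ * G ξ = 0 for all real ξ.
  have hC : ∀ ξ : ℝ, 𝓕 f ξ * G ξ = 0 := by
    intro ξ
    set c : ℝ → ℂ := fun x => Complex.exp (↑(-2 * π * x * ξ) * Complex.I) with hcdef
    have hcnorm : ∀ x, ‖c x‖ = 1 := by
      intro x
      rw [hcdef]
      exact Complex.norm_exp_ofReal_mul_I _
    have hccont : Continuous c := Complex.continuous_exp.comp (by fun_prop)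
    set Φ : ℝ → ℝ → ℂ := fun t x => c x * f (x - t) * w t with hΦdef
    have hΦmeas : AEStronglyMeasurable (Function.uncurry Φ) (ν.prod volume) := by
      have c1 : Continuous fun p : ℝ × ℝ => c p.2 * f (p.2 - p.1) :=
        (hccont.comp continuous_snd).mul (hf.comp (continuous_snd.sub continuous_fst))
      exact c1.aestronglyMeasurable.mul hw.1.comp_fst
    have hΦint : Integrable (Function.uncurry Φ) (ν.prod volume) := by
      rw [integrable_prod_iff hΦmeas]
      constructor
      · filter_upwards with t
        have h1 : Integrable (fun x => f (x - t)) volume := hfi.comp_sub_right t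
        have h2 : Integrable (fun x => c x * f (x - t)) volume :=
          h1.bdd_mul (c := 1) hccont.aestronglyMeasurable (Eventually.of_forall fun x => (hcnorm x).le)
        exact h2.mul_const (w t)
      · have heq : (fun t => ∫ y, ‖Function.uncurry Φ (t, y)‖) =
            fun t => (∫ x, ‖f x‖) * ‖w t‖ := by
          ext t
          have h3 : ∀ x, ‖Function.uncurry Φ (t, x)‖ = ‖f (x - t)‖ * ‖w t‖ := by
            intro x
            simp only [Function.uncurry, hΦdef, norm_mul, hcnorm, one_mul]
          simp_rw [h3]
          rw [integral_mul_const, integral_sub_right_eq_self (fun x => ‖f x‖) t]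
        rw [heq]
        exact hw.norm.const_mul _
    have hswap := integral_integral_swap hΦint
    -- the right side vanishes
    have hRHS : ∫ x, ∫ t, Φ t x ∂ν = 0 := by
      have : ∀ x, ∫ t, Φ t x ∂ν = c x * ∫ t, f (x - t) * w t ∂ν := by
        intro x
        rw [← integral_const_mul]
        congr 1
        ext t
        rw [hΦdef]
        ring
      simp [this, hconv]
    -- the left side is the product
    have hFf : 𝓕 f ξ = ∫ x, c x * f x := by
      rw [Real.fourier_real_eq_integral_exp_smul]
      simp only [smul_eq_mul, hcdef]
    have hinner : ∀ t : ℝ, ∫ x, Φ t x = 𝓕 f ξ * c t * w t := by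
      intro t
      have e2 : ∫ x, c x * f (x - t) = ∫ x, c (x + t) * f (x + t - t) :=
        (integral_add_right_eq_self (fun x => c x * f (x - t)) t).symm
      have e3 : ∀ x : ℝ, c (x + t) * f (x + t - t) = c t * (c x * f x) := by
        intro x
        rw [hcdef]
        simp only [add_sub_cancel_right]
        have e4 : ((↑(-2 * π * (x + t) * ξ) : ℂ) * Complex.I) =
            ↑(-2 * π * t * ξ) * Complex.I + ↑(-2 * π * x * ξ) * Complex.I := by
          push_cast
          ring
        rw [e4, Complex.exp_add, mul_assoc]
      calc ∫ x, Φ t x = (∫ x, c x * f (x - t)) * w t := by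
            rw [hΦdef, integral_mul_const]
        _ = (c t * ∫ x, c x * f x) * w t := by
            rw [e2]
            simp_rw [e3]
            rw [integral_const_mul]
        _ = 𝓕 f ξ * c t * w t := by rw [hFf]; ring
    have hGc : G ξ = ∫ t, c t * w t ∂ν := by
      rw [hGdef, hcdef]
      apply integral_congr_ae
      filter_upwards with t
      have e5 : ((-2 : ℂ) * ↑π * ↑t * Complex.I * ↑ξ) = ↑(-2 * π * t * ξ) * Complex.I := by
        push_cast
        ring
      rw [e5]
    have hLHS : ∫ t, ∫ x, Φ t x ∂volume ∂ν = 𝓕 f ξ * G ξ := by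
      simp_rw [hinner, mul_assoc]
      rw [integral_const_mul, hGc]
    rw [← hLHS, hswap]
    exact hRHS
  -- 𝓕 f is not identically zero.
  have hfour_ne : ∃ ξ₀ : ℝ, 𝓕 f ξ₀ ≠ 0 := by
    by_contra h
    push_neg at h
    have := fourier_ae_zero volume f hfi (fun ξ => h ξ)
    have hf0 : f = fun _ => (0 : ℂ) := by
      apply (Continuous.ae_eq_iff_eq (μ := volume) hf continuous_const).1
      exact this
    obtain ⟨x, hx⟩ := hfnz
    rw [hf0] at hx
    exact hx rfl
  obtain ⟨ξ₀, hξ₀⟩ := hfour_ne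
  have hfourcont : Continuous (𝓕 f) :=
    VectorFourier.fourierIntegral_continuous Real.continuous_fourierChar hL hfi
  have hev : ∀ᶠ ξ in 𝓝 ξ₀, 𝓕 f ξ ≠ 0 := hfourcont.continuousAt.eventually_ne hξ₀
  obtain ⟨ε, hε, hball⟩ := Metric.eventually_nhds_iff.1 hev
  have hGzero : ∀ ξ : ℝ, dist ξ ξ₀ < ε → G ξ = 0 := by
    intro ξ hξ
    exact (mul_eq_zero.1 (hC ξ)).resolve_left (hball hξ)
  -- frequently zero near ξ₀ in ℂ
  have hfreq : ∃ᶠ z in 𝓝[≠] (ξ₀ : ℂ), G z = 0 := by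
    have hu : Tendsto (fun n : ℕ => ((ξ₀ + ε / 2 * (1 / (n + 1)) : ℝ) : ℂ)) atTop
        (𝓝[≠] (ξ₀ : ℂ)) := by
      apply tendsto_nhdsWithin_of_tendsto_nhds_of_eventually_within
      · have h1 : Tendsto (fun n : ℕ => (ξ₀ + ε / 2 * (1 / (n + 1)) : ℝ)) atTop (𝓝 ξ₀) := by
          have := tendsto_one_div_add_atTop_nhds_zero_nat (𝕜 := ℝ)
          have h2 := (tendsto_const_nhds (x := ξ₀) (f := atTop (α := ℕ))).add
            ((tendsto_const_nhds (x := ε / 2) (f := atTop (α := ℕ))).mul this)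
          simpa using h2
        exact (Complex.continuous_ofReal.tendsto ξ₀).comp h1
      · filter_upwards with n
        simp only [Set.mem_compl_iff, Set.mem_singleton_iff]
        intro hcontra
        have := Complex.ofReal_injective hcontra
        have hpos : 0 < ε / 2 * (1 / (n + 1 : ℝ)) := by positivity
        linarith [this]
    apply hu.frequently
    apply Frequently.of_forall
    intro n
    apply hGzero
    have hpos : (0:ℝ) < 1 / (n + 1 : ℝ) := by positivity
    have hle : (1:ℝ) / (n + 1 : ℝ) ≤ 1 := by
      rw [div_le_one (by positivity)]
      linarith
    rw [Real.dist_eq]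
    have : ξ₀ + ε / 2 * (1 / (n + 1 : ℝ)) - ξ₀ = ε / 2 * (1 / (n + 1 : ℝ)) := by ring
    rw [this, abs_of_pos (by positivity)]
    nlinarith
  have hGall : ∀ z : ℂ, G z = 0 := by
    have := hGanalytic.eqOn_zero_of_preconnected_of_frequently_eq_zero
      isPreconnected_univ (Set.mem_univ (ξ₀ : ℂ)) hfreq
    exact fun z => this (Set.mem_univ z)
  -- conclude
  have hwae : ∀ᵐ t ∂ν, w t = 0 := by
    apply fourier_ae_zero ν w hw
    intro ξ
    rw [hGreal ξ]
    exact hGall _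
  have : ν.withDensityᵥ w = ν.withDensityᵥ 0 := WithDensityᵥEq.congr_ae hwae
  rw [this, withDensityᵥ_zero]
end

section
/- Let f : ℝ → ℂ, a, b ∈ ℝ with a ≠ 0, n ∈ ℕ, and c = (c₁,…,c_n) ∈ ℂⁿ. Define F = T_b f + ∑_{j=1}^n c_j T_{aj+b} f, where T_s f = f(·−s). Then for every ℓ ∈ ℕ there exist complex values p_{ℓ,1},…,p_{ℓ,n} (depending polynomially on c) such that A_ℓ := T_b f + ∑_{j=1}^n p_{ℓ,j} T_{a(ℓ+j-1)+b} f lies in the linear span of the translates {F(·−ak) : k ∈ ℤ}, and |p_{ℓ,j}| ≤ C^ℓ for some constant C > 0 independent of ℓ and j. -/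
theorem polynomial_coefficients_in_span
    (f : ℝ → ℂ) (a b : ℝ) (ha : a ≠ 0) (n : ℕ) (c : Fin n → ℂ)
    (F : ℝ → ℂ)
    (hF : ∀ x, F x = f (x - b) + ∑ j : Fin n, c j * f (x - (a * ((j : ℕ) + 1) + b))) :
    ∃ C : ℝ, 0 < C ∧ ∀ ℓ : ℕ, 1 ≤ ℓ → ∃ p : Fin n → ℂ,
      (∀ j, ‖p j‖ ≤ C ^ ℓ) ∧
      (fun x => f (x - b) + ∑ j : Fin n, p j * f (x - (a * ((ℓ : ℝ) + (j : ℕ)) + b))) ∈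
        Submodule.span ℂ (Set.range fun k : ℤ => fun x : ℝ => F (x - a * k)) := by
  cases n with
  | zero =>
    refine ⟨1, one_pos, fun ℓ _ => ⟨fun j => 0, fun j => j.elim0, ?_⟩⟩
    have h : (fun x => f (x - b) + ∑ j : Fin 0, (0:ℂ) * f (x - (a * ((ℓ : ℝ) + (j : ℕ)) + b)))
        = fun x : ℝ => F (x - a * ((0:ℤ) : ℝ)) := by
      funext x
      simp [hF]
    rw [h]
    exact Submodule.subset_span ⟨0, rfl⟩
  | succ m =>
    set S : ℝ := ∑ j : Fin (m+1), ‖c j‖ with hS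
    have hS0 : 0 ≤ S := Finset.sum_nonneg fun i _ => norm_nonneg _
    have hcS : ∀ j, ‖c j‖ ≤ S := fun j =>
      Finset.single_le_sum (fun i _ => norm_nonneg (c i)) (Finset.mem_univ j)
    refine ⟨1 + S, by linarith, ?_⟩
    set C : ℝ := 1 + S with hCdef
    have hC1 : 1 ≤ C := by linarith
    have hC0 : 0 < C := by linarith
    intro ℓ hℓ
    induction ℓ, hℓ using Nat.le_induction with
    | base =>
      refine ⟨c, fun j => ?_, ?_⟩
      · rw [pow_one]
        exact (hcS j).trans (by linarith)
      · have h : (fun x => f (x - b) +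
            ∑ j : Fin (m+1), c j * f (x - (a * (((1:ℕ) : ℝ) + (j : ℕ)) + b)))
            = fun x : ℝ => F (x - a * ((0:ℤ) : ℝ)) := by
          funext x
          simp only [Int.cast_zero, mul_zero, sub_zero, hF, Nat.cast_one]
          congr 1
          refine Finset.sum_congr rfl fun j _ => ?_
          ring_nf
        rw [h]
        exact Submodule.subset_span ⟨0, rfl⟩
    | succ ℓ hℓ1 ih =>
      obtain ⟨p, hbound, hmem⟩ := ih
      have sdef : ∃ s : Fin (m+1) → ℂ, s = Fin.snoc (fun i : Fin m => p i.succ) (0:ℂ) :=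
        ⟨_, rfl⟩
      obtain ⟨s, hsdef⟩ := sdef
      set q : Fin (m+1) → ℂ := fun j => s j - p 0 * c j with hq
      have hCl : (0:ℝ) < C ^ ℓ := pow_pos hC0 ℓ
      have hsnoc : ∀ j : Fin (m+1),
          ‖s j‖ ≤ C ^ ℓ := by
        intro j
        induction j using Fin.lastCases with
        | last => rw [hsdef, Fin.snoc_last]; simp; positivity
        | cast i => rw [hsdef, Fin.snoc_castSucc]; exact hbound _
      refine ⟨q, fun j => ?_, ?_⟩
      · have h1 := hsnoc j
        have h2 := hbound 0
        have h3 := hcS j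
        have h4 : ‖p 0 * c j‖ ≤ C ^ ℓ * S := by
          rw [norm_mul]
          exact mul_le_mul h2 h3 (norm_nonneg _) hCl.le
        have h5 : ‖q j‖ ≤ ‖s j‖ + ‖p 0 * c j‖ := norm_sub_le _ _
        have h6 : C ^ (ℓ+1) = C ^ ℓ * C := pow_succ C ℓ
        rw [h6, hCdef]
        nlinarith
      · have hFk : (fun x : ℝ => F (x - a * ((ℓ:ℤ) : ℝ))) ∈
            Submodule.span ℂ (Set.range fun k : ℤ => fun x : ℝ => F (x - a * k)) :=
          Submodule.subset_span ⟨(ℓ:ℤ), rfl⟩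
        have hmem2 := Submodule.sub_mem _ hmem (Submodule.smul_mem _ (p 0) hFk)
        have heq : (fun x => f (x - b) +
            ∑ j : Fin (m+1), q j * f (x - (a * (((ℓ+1:ℕ) : ℝ) + (j : ℕ)) + b)))
            = (fun x => f (x - b) +
              ∑ j : Fin (m+1), p j * f (x - (a * ((ℓ : ℝ) + (j : ℕ)) + b)))
              - p 0 • (fun x : ℝ => F (x - a * ((ℓ:ℤ) : ℝ))) := by
          funext x
          simp only [Pi.sub_apply, Pi.smul_apply, smul_eq_mul, hF]
          -- abbreviations
          have e1 : ∑ j : Fin (m+1), q j * f (x - (a * (((ℓ+1:ℕ) : ℝ) + (j : ℕ)) + b))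
              = (∑ j : Fin (m+1),
                  s j * f (x - (a * (((ℓ+1:ℕ) : ℝ) + (j : ℕ)) + b)))
                - p 0 * ∑ j : Fin (m+1),
                    c j * f (x - (a * (((ℓ+1:ℕ) : ℝ) + (j : ℕ)) + b)) := by
            rw [Finset.mul_sum, ← Finset.sum_sub_distrib]
            refine Finset.sum_congr rfl fun j _ => ?_
            rw [hq]; ring
          rw [e1]
          have e2 : ∑ j : Fin (m+1), c j * f (x - (a * (((ℓ+1:ℕ) : ℝ) + (j : ℕ)) + b))
              = ∑ j : Fin (m+1),
                  c j * f (x - a * ((ℓ:ℤ) : ℝ) - (a * ((j : ℕ) + 1) + b)) := by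
            refine Finset.sum_congr rfl fun j _ => ?_
            congr 1
            push_cast
            ring
          rw [e2]
          have e3 : (∑ j : Fin (m+1),
              s j * f (x - (a * (((ℓ+1:ℕ) : ℝ) + (j : ℕ)) + b)))
              = ∑ i : Fin m, p i.succ * f (x - (a * (((ℓ+1:ℕ) : ℝ) + (i : ℕ)) + b)) := by
            rw [Fin.sum_univ_castSucc]
            simp [hsdef, Fin.snoc_castSucc, Fin.snoc_last]
          rw [e3]
          have e4 : ∑ j : Fin (m+1), p j * f (x - (a * ((ℓ : ℝ) + (j : ℕ)) + b))
              = p 0 * f (x - a * ((ℓ:ℤ) : ℝ) - b)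
                + ∑ i : Fin m, p i.succ * f (x - (a * (((ℓ+1:ℕ) : ℝ) + (i : ℕ)) + b)) := by
            rw [Fin.sum_univ_succ]
            congr 1
            · congr 2
              push_cast [Fin.val_zero]
              ring
            · refine Finset.sum_congr rfl fun i _ => ?_
              congr 3
              push_cast [Fin.val_succ]
              ring
          rw [e4]
          ring
        rw [heq]
        exact hmem2
end

section
/- Let X = C(I) or L^p(I) (1 ≤ p < ∞) for a compact interval I, let f : ℝ → ℂ be continuous with super-exponential decay, a ≠ 0, b ∈ ℝ, and F = T_b f + ∑_{j=1}^n c_j T_{aj+b} f with c ∈ ℂⁿ. Then T_b f belongs to the closure (in X) of the linear span of {F(·−ak) : k ∈ ℤ}. -/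
open Finset

noncomputable def dcoef (n : ℕ) (c : Fin n → ℂ) : ℕ → ℂ
  | 0 => 1
  | (m+1) => -∑ j : Fin n, if (j : ℕ) ≤ m then c j * dcoef n c (m - (j : ℕ)) else 0
  decreasing_by exact Nat.lt_succ_of_le (Nat.sub_le _ _)

lemma dcoef_bound (n : ℕ) (c : Fin n → ℂ) (m : ℕ) :
    ‖dcoef n c m‖ ≤ (1 + ∑ j, ‖c j‖) ^ m := by
  induction m using Nat.strong_induction_on with
  | _ m ih =>
    match m with
    | 0 => simp [dcoef]
    | (m+1) =>
      have hρ1 : (1:ℝ) ≤ 1 + ∑ j, ‖c j‖ :=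
        le_add_of_nonneg_right (Finset.sum_nonneg fun _ _ => norm_nonneg _)
      rw [dcoef, norm_neg]
      calc ‖∑ j : Fin n, if (j : ℕ) ≤ m then c j * dcoef n c (m - (j:ℕ)) else 0‖
          ≤ ∑ j : Fin n, ‖c j‖ * (1 + ∑ i, ‖c i‖) ^ m := by
            refine (norm_sum_le _ _).trans (Finset.sum_le_sum fun j _ => ?_)
            split_ifs with hj
            · rw [norm_mul]
              refine mul_le_mul_of_nonneg_left ?_ (norm_nonneg _)
              exact (ih _ (by omega)).trans (pow_le_pow_right₀ hρ1 (by omega))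
            · simp only [norm_zero]
              positivity
        _ = (∑ j : Fin n, ‖c j‖) * (1 + ∑ i, ‖c i‖) ^ m := by rw [← Finset.sum_mul]
        _ ≤ (1 + ∑ i, ‖c i‖) ^ (m+1) := by
            have h0 : (0:ℝ) ≤ (1 + ∑ i, ‖c i‖) ^ m := by positivity
            calc (∑ j : Fin n, ‖c j‖) * (1 + ∑ i, ‖c i‖) ^ m
                ≤ (1 + ∑ i, ‖c i‖) * (1 + ∑ i, ‖c i‖) ^ m :=
                  mul_le_mul_of_nonneg_right (by linarith) h0
              _ = (1 + ∑ i, ‖c i‖) ^ (m+1) := by ring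

lemma dcoef_eq (n : ℕ) (c : Fin n → ℂ) (M : ℕ) :
    ∑ k ∈ range (M+1), ∑ j : Fin n,
      (if k + (j:ℕ) + 1 = M + 1 then dcoef n c k * c j else 0) = - dcoef n c (M+1) := by
  rw [dcoef, neg_neg, Finset.sum_comm]
  refine Finset.sum_congr rfl fun j _ => ?_
  by_cases hj : (j:ℕ) ≤ M
  · rw [if_pos hj]
    have hcong : ∀ k ∈ range (M+1),
        (if k + (j:ℕ) + 1 = M+1 then dcoef n c k * c j else 0)
          = if k = M - (j:ℕ) then dcoef n c k * c j else 0 := by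
      intro k _
      have heq : (k + (j:ℕ) + 1 = M+1) = (k = M - (j:ℕ)) := by
        apply propext; constructor <;> (intro; omega)
      simp only [heq]
    rw [Finset.sum_congr rfl hcong, Finset.sum_ite_eq' (range (M+1)) (M - (j:ℕ))]
    rw [if_pos (mem_range.mpr (by omega))]
    ring
  · rw [if_neg hj]
    exact Finset.sum_eq_zero fun k hk => if_neg (by omega)

lemma key_identity (n : ℕ) (c : Fin n → ℂ) (u : ℕ → ℂ) (M : ℕ) :
    ∑ k ∈ range (M+1), dcoef n c k * (u k + ∑ j : Fin n, c j * u (k + (j:ℕ) + 1))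
      = u 0 + ∑ k ∈ range (M+1), ∑ j : Fin n,
          (if M < k + (j:ℕ) + 1 then dcoef n c k * (c j * u (k + (j:ℕ) + 1)) else 0) := by
  induction M with
  | zero =>
      simp [dcoef, Finset.mul_sum]
  | succ M ih =>
      conv_lhs => rw [Finset.sum_range_succ]
      conv_rhs => rw [Finset.sum_range_succ]
      rw [ih]
      have h1 : ∀ j ∈ (univ : Finset (Fin n)),
          (if M + 1 < (M+1) + (j:ℕ) + 1
            then dcoef n c (M+1) * (c j * u ((M+1) + (j:ℕ) + 1)) else 0)
          = dcoef n c (M+1) * (c j * u ((M+1) + (j:ℕ) + 1)) :=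
        fun j _ => if_pos (by omega)
      rw [Finset.sum_congr rfl h1]
      have h2 : ∑ k ∈ range (M+1), ∑ j : Fin n,
          (if M + 1 < k + (j:ℕ) + 1 then dcoef n c k * (c j * u (k + (j:ℕ) + 1)) else 0)
        = (∑ k ∈ range (M+1), ∑ j : Fin n,
            (if M < k + (j:ℕ) + 1 then dcoef n c k * (c j * u (k + (j:ℕ) + 1)) else 0))
          - (∑ k ∈ range (M+1), ∑ j : Fin n,
            (if k + (j:ℕ) + 1 = M + 1 then dcoef n c k * c j else 0)) * u (M+1) := by
        rw [Finset.sum_mul, ← Finset.sum_sub_distrib]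
        refine Finset.sum_congr rfl fun k _ => ?_
        rw [Finset.sum_mul, ← Finset.sum_sub_distrib]
        refine Finset.sum_congr rfl fun j _ => ?_
        split_ifs <;> try omega
        · ring
        · rename_i hx
          rw [hx]
          ring
        · ring
      rw [h2, dcoef_eq, mul_add, Finset.mul_sum]
      ring

theorem translate_in_closure_of_span (A B : ℝ) (hAB : A ≤ B)
    (f : ℝ → ℂ) (hf : Continuous f)
    (hdecay : ∀ γ : ℝ, Filter.Tendsto (fun x => ‖f x‖ * Real.exp (γ * |x|))
      (Filter.cocompact ℝ) (nhds 0))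
    (a b : ℝ) (ha : a ≠ 0) (n : ℕ) (c : Fin n → ℂ)
    (F : ℝ → ℂ)
    (hF : ∀ x, F x = f (x - b) + ∑ j : Fin n, c j * f (x - (a * ((j : ℕ) + 1) + b))) :
    ∀ ε > 0, ∃ h ∈ Submodule.span ℂ (Set.range fun k : ℤ => fun x : ℝ => F (x - a * k)),
      ∀ t ∈ Set.Icc A B, ‖f (t - b) - h t‖ ≤ ε := by
  intro ε hε
  set ρ : ℝ := 1 + ∑ j, ‖c j‖ with hρdef
  have hρ1 : (1:ℝ) ≤ ρ :=
    le_add_of_nonneg_right (Finset.sum_nonneg fun _ _ => norm_nonneg _)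
  have hρ0 : (0:ℝ) < ρ := lt_of_lt_of_le one_pos hρ1
  have haabs : (0:ℝ) < |a| := abs_pos.mpr ha
  set γ : ℝ := Real.log (2*ρ) / |a| with hγdef
  have hlog : 0 < Real.log (2*ρ) := Real.log_pos (by linarith)
  have hγ0 : 0 < γ := div_pos hlog haabs
  have hγa : γ * |a| = Real.log (2*ρ) := by
    rw [hγdef]; field_simp
  -- bound on f
  obtain ⟨C, hC0, hCb⟩ : ∃ C : ℝ, 0 ≤ C ∧ ∀ x, ‖f x‖ ≤ C * Real.exp (-(γ * |x|)) := by
    have hev : ∀ᶠ x in Filter.cocompact ℝ, ‖f x‖ * Real.exp (γ * |x|) < 1 :=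
      (hdecay γ).eventually_lt_const one_pos
    obtain ⟨K, hK, hKb⟩ := (Filter.hasBasis_cocompact.eventually_iff).mp hev
    obtain ⟨C0, hC0b⟩ := hK.exists_bound_of_continuousOn
      (f := fun x => ‖f x‖ * Real.exp (γ * |x|))
      ((hf.norm.mul (Real.continuous_exp.comp
        (continuous_const.mul continuous_abs))).continuousOn)
    refine ⟨max C0 1, le_trans zero_le_one (le_max_right _ _), fun x => ?_⟩
    have hexp : (0:ℝ) < Real.exp (γ * |x|) := Real.exp_pos _
    have hx : ‖f x‖ * Real.exp (γ * |x|) ≤ max C0 1 := by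
      by_cases hxK : x ∈ K
      · have h := hC0b x hxK
        rw [Real.norm_eq_abs] at h
        exact ((le_abs_self _).trans h).trans (le_max_left _ _)
      · exact (hKb hxK).le.trans (le_max_right _ _)
    calc ‖f x‖ ≤ max C0 1 / Real.exp (γ * |x|) := (le_div_iff₀ hexp).mpr hx
      _ = max C0 1 * Real.exp (-(γ * |x|)) := by rw [Real.exp_neg]; ring
  set K0 : ℝ := |A| + |B| + |b| with hK0def
  set CE : ℝ := C * Real.exp (γ * K0) with hCEdef
  have hCE0 : 0 ≤ CE := by positivity
  set q : ℝ := Real.exp (-(γ * |a|)) with hqdef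
  have hq0 : 0 < q := Real.exp_pos _
  have hqval : q = (2*ρ)⁻¹ := by
    rw [hqdef, hγa, Real.exp_neg, Real.exp_log (by linarith)]
  have hρne : ρ ≠ 0 := ne_of_gt hρ0
  have hρq : ρ * q = 1/2 := by
    rw [hqval]; field_simp
  have hqhalf : q ≤ 1/2 := by
    rw [hqval]
    calc (2*ρ)⁻¹ ≤ 2⁻¹ := by
          apply inv_anti₀ <;> linarith
      _ = 1/2 := by norm_num
  have hq1 : q ≤ 1 := hqhalf.trans (by norm_num)
  -- decay of translated f on [A,B]
  have hu : ∀ (m : ℕ), ∀ t ∈ Set.Icc A B,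
      ‖f (t - (a * m + b))‖ ≤ CE * q ^ m := by
    intro m t ht
    have htabs : |t| ≤ |A| + |B| := by
      rcases ht with ⟨h1, h2⟩
      rw [abs_le]
      constructor
      · calc -(|A| + |B|) ≤ -|A| := by linarith [abs_nonneg B]
          _ ≤ A := neg_abs_le A
          _ ≤ t := h1
      · calc t ≤ B := h2
          _ ≤ |B| := le_abs_self B
          _ ≤ |A| + |B| := by linarith [abs_nonneg A]
    have habs : |a| * m - K0 ≤ |t - (a * m + b)| := by
      have h1 : |a * m| ≤ |t - b| + |t - (a * m + b)| := by
        have h := abs_sub (t - b) (t - (a * m + b))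
        have heq : t - b - (t - (a * m + b)) = a * m := by ring
        rw [heq] at h
        exact h
      have h2 : |t - b| ≤ K0 := by
        calc |t - b| ≤ |t| + |b| := abs_sub _ _
          _ ≤ K0 := by rw [hK0def]; linarith
      have h3 : |a * m| = |a| * m := by
        rw [abs_mul, Nat.abs_cast]
      linarith
    calc ‖f (t - (a * m + b))‖ ≤ C * Real.exp (-(γ * |t - (a * m + b)|)) := hCb _
      _ ≤ C * Real.exp (γ * K0 + (-(γ * |a|)) * m) := by
          refine mul_le_mul_of_nonneg_left (Real.exp_le_exp.mpr ?_) hC0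
          nlinarith
      _ = CE * q ^ m := by
          rw [hCEdef, hqdef, Real.exp_add, mul_comm (-(γ * |a|)) (m:ℝ), Real.exp_nat_mul]
          ring
  -- geometric bound
  have hkey : ∀ M k jn : ℕ, k ≤ M → M < k + jn + 1 →
      ρ ^ k * q ^ (k + jn + 1) ≤ (1/2:ℝ) ^ M * (1/2) := by
    intro M k jn hk hkj
    calc ρ ^ k * q ^ (k + jn + 1)
        ≤ ρ ^ M * q ^ (M + 1) :=
          mul_le_mul (pow_le_pow_right₀ hρ1 hk)
            (pow_le_pow_of_le_one hq0.le hq1 (by omega))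
            (pow_nonneg hq0.le _) (pow_nonneg (by linarith) M)
      _ = (ρ * q) ^ M * q := by rw [pow_succ, ← mul_assoc, ← mul_pow]
      _ = (1/2:ℝ) ^ M * q := by rw [hρq]
      _ ≤ (1/2:ℝ) ^ M * (1/2) := by
          apply mul_le_mul_of_nonneg_left hqhalf
          positivity
  -- choose M
  have htend : Filter.Tendsto
      (fun M : ℕ => ((M:ℝ) + 1) * ((ρ - 1) * (CE * ((1/2:ℝ) ^ M * (1/2)))))
      Filter.atTop (nhds 0) := by
    have h1 : Filter.Tendsto (fun M : ℕ => ((M:ℝ) + 1) * (1/2:ℝ) ^ M)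
        Filter.atTop (nhds 0) := by
      have ha1 := tendsto_self_mul_const_pow_of_lt_one
        (by norm_num : (0:ℝ) ≤ 1/2) (by norm_num : (1:ℝ)/2 < 1)
      have ha2 := tendsto_pow_atTop_nhds_zero_of_lt_one
        (by norm_num : (0:ℝ) ≤ 1/2) (by norm_num : (1:ℝ)/2 < 1)
      have := ha1.add ha2
      simp only [add_zero] at this
      convert this using 2 with M
      ring
    have h2 := h1.const_mul ((ρ - 1) * (CE * (1/2)))
    simp only [mul_zero] at h2
    convert h2 using 2 with M
    ring
  obtain ⟨M, hM⟩ := (htend.eventually_lt_const hε).exists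
  -- the approximant
  refine ⟨fun t => ∑ k ∈ range (M+1), dcoef n c k * F (t - a * k), ?_, ?_⟩
  · have hfun : (fun t => ∑ k ∈ range (M+1), dcoef n c k * F (t - a * k))
        = ∑ k ∈ range (M+1), dcoef n c k • (fun x : ℝ => F (x - a * (k:ℕ))) := by
      funext t
      rw [Finset.sum_apply]
      rfl
    rw [hfun]
    refine Submodule.sum_mem _ fun k _ => Submodule.smul_mem _ _
      (Submodule.subset_span ⟨(k:ℤ), ?_⟩)
    norm_num
  · intro t ht
    show ‖f (t - b) - ∑ k ∈ range (M+1), dcoef n c k * F (t - a * (k:ℕ))‖ ≤ ε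
    set u : ℕ → ℂ := fun m => f (t - (a * m + b)) with hudef
    have hFk : ∀ k : ℕ, F (t - a * k) = u k + ∑ j : Fin n, c j * u (k + (j:ℕ) + 1) := by
      intro k
      rw [hF]
      congr 1
      · show f (t - a * k - b) = f (t - (a * k + b))
        congr 1
        ring
      · refine Finset.sum_congr rfl fun j _ => ?_
        congr 2
        push_cast
        ring
    have hsum : (∑ k ∈ range (M+1), dcoef n c k * F (t - a * k))
        = u 0 + ∑ k ∈ range (M+1), ∑ j : Fin n,
            (if M < k + (j:ℕ) + 1 then dcoef n c k * (c j * u (k + (j:ℕ) + 1)) else 0) := by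
      rw [Finset.sum_congr rfl fun k _ => by rw [hFk k]]
      exact key_identity n c u M
    have hu0 : f (t - b) = u 0 := by
      rw [hudef]
      norm_num
    rw [hsum, ← hu0]
    rw [sub_add_cancel_left, norm_neg]
    have hterm : ∀ k ∈ range (M+1), ∀ j : Fin n,
        ‖if M < k + (j:ℕ) + 1 then dcoef n c k * (c j * u (k + (j:ℕ) + 1)) else 0‖
          ≤ ‖c j‖ * (CE * ((1/2:ℝ) ^ M * (1/2))) := by
      intro k hk j
      split_ifs with hcond
      · have hkM : k ≤ M := by
          have := mem_range.mp hk; omega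
        calc ‖dcoef n c k * (c j * u (k + (j:ℕ) + 1))‖
            = ‖dcoef n c k‖ * ‖c j‖ * ‖u (k + (j:ℕ) + 1)‖ := by
              rw [norm_mul, norm_mul]; ring
          _ ≤ ρ ^ k * ‖c j‖ * (CE * q ^ (k + (j:ℕ) + 1)) := by
              refine mul_le_mul (mul_le_mul_of_nonneg_right (dcoef_bound n c k)
                (norm_nonneg _)) ?_ (norm_nonneg _) ?_
              · exact hu (k + (j:ℕ) + 1) t ht
              · positivity
          _ = ‖c j‖ * (CE * (ρ ^ k * q ^ (k + (j:ℕ) + 1))) := by ring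
          _ ≤ ‖c j‖ * (CE * ((1/2:ℝ) ^ M * (1/2))) := by
              refine mul_le_mul_of_nonneg_left
                (mul_le_mul_of_nonneg_left (hkey M k (j:ℕ) hkM hcond) hCE0)
                (norm_nonneg _)
      · simp only [norm_zero]
        positivity
    calc ‖∑ k ∈ range (M+1), ∑ j : Fin n,
          (if M < k + (j:ℕ) + 1 then dcoef n c k * (c j * u (k + (j:ℕ) + 1)) else 0)‖
        ≤ ∑ k ∈ range (M+1), ∑ j : Fin n, ‖c j‖ * (CE * ((1/2:ℝ) ^ M * (1/2))) := by
          refine (norm_sum_le _ _).trans (Finset.sum_le_sum fun k hk => ?_)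
          exact (norm_sum_le _ _).trans (Finset.sum_le_sum fun j _ => hterm k hk j)
      _ = ((M:ℝ) + 1) * ((ρ - 1) * (CE * ((1/2:ℝ) ^ M * (1/2)))) := by
          rw [Finset.sum_const, ← Finset.sum_mul, Finset.card_range]
          rw [nsmul_eq_mul]
          push_cast
          rw [hρdef]
          ring
      _ ≤ ε := hM.le
end
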